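/- For k = ∞ and 0 ≤ c_s ≤ n-1, 0 ≤ c_ℓ ≤ n-1 (with strict positivity where needed for completeness arguments), the bidirected n-cycle is pairwise stable. -/

import Mathlib

open Relation

/-- A bidirected network: speaking edges `Es` and listening edges `El`. -/
structure BiNet (V : Type*) where
  Es : V → V → Prop
  El : V → V → Prop

variable {V : Type*} [Fintype V] [DecidableEq V]

/-- A speaking step from `a` to `b`: the speaking edge `s_{ab}` matched by `ℓ_{ba}`. -/
def sStep (G : BiNet V) (a b : V) : Prop := G.Es a b ∧ G.El b a

/-- A listening step from `a` to `b`: the listening edge `ℓ_{ab}` matched by `s_{ba}`. -/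
def lStep (G : BiNet V) (a b : V) : Prop := G.El a b ∧ G.Es b a

/-- The speaking-reachable set of `v` for k = ∞ (excluding `v`). -/
def RsInf (G : BiNet V) (v : V) : Set V := {w | w ≠ v ∧ ReflTransGen (sStep G) v w}

/-- The listening-reachable set of `v` for k = ∞ (excluding `v`). -/
def RlInf (G : BiNet V) (v : V) : Set V := {w | w ≠ v ∧ ReflTransGen (lStep G) v w}

/-- Speaking out-degree. -/
noncomputable def dsOut (G : BiNet V) (v : V) : ℕ := {w | G.Es v w}.ncard

/-- Listening out-degree. -/
noncomputable def dlOut (G : BiNet V) (v : V) : ℕ := {w | G.El v w}.ncard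

/-- Utility of agent `v` (k = ∞). -/
noncomputable def utilInf (G : BiNet V) (cs cl : ℝ) (v : V) : ℝ :=
  (((RsInf G v).ncard : ℝ) - cs * (dsOut G v : ℝ)) +
    (((RlInf G v).ncard : ℝ) - cl * (dlOut G v : ℝ))

/-- Social welfare (k = ∞). -/
noncomputable def welfareInf (G : BiNet V) (cs cl : ℝ) : ℝ :=
  ∑ v : V, utilInf G cs cl v

/-- `G` is a bidirected cycle: speaking edges form a directed Hamiltonian cycle and the
listening edges are exactly their reverses. -/
def IsBiCycle (G : BiNet V) : Prop :=
  ∃ e : V ≃ Fin (Fintype.card V),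
    (∀ u v, G.Es u v ↔ (e v).val = ((e u).val + 1) % Fintype.card V) ∧
    (∀ u v, G.El u v ↔ (e u).val = ((e v).val + 1) % Fintype.card V)

/-- Add the speaking edge `s_{uv}`. -/
def addS (G : BiNet V) (u v : V) : BiNet V :=
  ⟨fun a b => G.Es a b ∨ (a = u ∧ b = v), G.El⟩

/-- Delete the speaking edge `s_{uv}`. -/
def delS (G : BiNet V) (u v : V) : BiNet V :=
  ⟨fun a b => G.Es a b ∧ ¬(a = u ∧ b = v), G.El⟩

/-- Add the listening edge `ℓ_{uv}`. -/
def addL (G : BiNet V) (u v : V) : BiNet V :=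
  ⟨G.Es, fun a b => G.El a b ∨ (a = u ∧ b = v)⟩

/-- Delete the listening edge `ℓ_{uv}`. -/
def delL (G : BiNet V) (u v : V) : BiNet V :=
  ⟨G.Es, fun a b => G.El a b ∧ ¬(a = u ∧ b = v)⟩

/-- Bidirected pairwise stability (k = ∞). -/
def BiPairwiseStableInf (G : BiNet V) (cs cl : ℝ) : Prop :=
  (∀ u v, G.Es u v → utilInf (delS G u v) cs cl u ≤ utilInf G cs cl u) ∧
  (∀ u v, G.El u v → utilInf (delL G u v) cs cl u ≤ utilInf G cs cl u) ∧
  (∀ u v, utilInf G cs cl u < utilInf (addL (addS G u v) v u) cs cl u →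
      utilInf (addL (addS G u v) v u) cs cl v < utilInf G cs cl v)

/-! In the bidirected cycle every agent reaches all `n - 1` others, both speaking and listening,
while paying for one edge of each kind. Adding edges therefore only adds cost. Deleting its
unique speaking edge leaves an agent with no speaking step at all, so its speaking reach drops
from `n - 1` to `0` while it saves only `c_s ≤ n - 1`; listening is the same after exchanging the
two kinds of edges. -/

open Fin.NatCast Fin.CommRing in
theorem Fin.reflTransGen_add_one {n : ℕ} [NeZero n] (a b : Fin n) :
    ReflTransGen (fun x y : Fin n => y = x + 1) a b := by
  have hreach : ∀ k : ℕ, ReflTransGen (fun x y : Fin n => y = x + 1) a (a + k) := by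
    intro k
    induction k with
    | zero => simpa using ReflTransGen.refl
    | succ k ih => exact ih.tail (by push_cast; ring)
  simpa using hreach (b - a).val

theorem Fin.eq_add_one_iff_val_eq {n : ℕ} [NeZero n] {a b : Fin n} :
    b = a + 1 ↔ b.val = (a.val + 1) % n := by
  rw [Fin.ext_iff, Fin.val_add, Fin.val_one', Nat.add_mod_mod]

open Fin.CommRing in
theorem Fin.neg_eq_neg_add_one_iff {n : ℕ} [NeZero n] {a b : Fin n} :
    -b = -a + 1 ↔ a = b + 1 := by
  constructor <;> intro h <;> linear_combination h

section

variable {α : Type*}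

def BiNet.swap (G : BiNet α) : BiNet α := ⟨G.El, G.Es⟩

theorem utilInf_swap (G : BiNet α) (cs cl : ℝ) (v : α) :
    utilInf G.swap cs cl v = utilInf G cl cs v :=
  add_comm _ _

theorem RsInf_eq_empty (G : BiNet α) {v : α} (h : ∀ w, ¬G.Es v w) : RsInf G v = ∅ := by
  refine Set.eq_empty_of_forall_notMem fun w ⟨hwv, hvw⟩ => ?_
  rcases hvw.cases_head with rfl | ⟨c, hvc, -⟩
  exacts [hwv rfl, h c hvc.1]

variable [Fintype α]

theorem ncard_setOf_ne (v : α) : {w | w ≠ v}.ncard = Fintype.card α - 1 := by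
  rw [← Set.compl_singleton_eq, Set.ncard_compl, Set.ncard_singleton, Nat.card_eq_fintype_card]

theorem cast_card_sub_one (v : α) : ((Fintype.card α - 1 : ℕ) : ℝ) = Fintype.card α - 1 := by
  have : Nonempty α := ⟨v⟩
  rw [Nat.cast_sub Fintype.card_pos, Nat.cast_one]

theorem ncard_RsInf_le (G : BiNet α) (v : α) : (RsInf G v).ncard ≤ Fintype.card α - 1 :=
  ncard_setOf_ne v ▸ Set.ncard_le_ncard fun _ hw => hw.1

theorem utilInf_le (G : BiNet α) (cs cl : ℝ) (v : α) :
    utilInf G cs cl v ≤ ((Fintype.card α - 1 : ℕ) : ℝ) - cs * dsOut G v +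
      (((Fintype.card α - 1 : ℕ) : ℝ) - cl * dlOut G v) := by
  have hs : ((RsInf G v).ncard : ℝ) ≤ (Fintype.card α - 1 : ℕ) := by
    exact_mod_cast ncard_RsInf_le G v
  have hl : ((RlInf G v).ncard : ℝ) ≤ (Fintype.card α - 1 : ℕ) := by
    exact_mod_cast ncard_RsInf_le G.swap v
  unfold utilInf
  linarith

section Saturated

/- `u` is saturated: it already reaches all `n - 1` other agents, both speaking and listening. -/

variable {G : BiNet α} {cs cl : ℝ} {u : α}
  (hRs : (RsInf G u).ncard = Fintype.card α - 1) (hRl : (RlInf G u).ncard = Fintype.card α - 1)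
include hRs hRl

theorem utilInf_eq_of_saturated :
    utilInf G cs cl u = ((Fintype.card α - 1 : ℕ) : ℝ) - cs * dsOut G u +
      (((Fintype.card α - 1 : ℕ) : ℝ) - cl * dlOut G u) := by
  rw [utilInf, hRs, hRl]

theorem utilInf_le_of_saturated {G' : BiNet α} (hEs : ∀ w, G.Es u w → G'.Es u w)
    (hEl : ∀ w, G.El u w → G'.El u w) (hcs : 0 ≤ cs) (hcl : 0 ≤ cl) :
    utilInf G' cs cl u ≤ utilInf G cs cl u := by
  have hds : (dsOut G u : ℝ) ≤ dsOut G' u := by exact_mod_cast Set.ncard_le_ncard hEs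
  have hdl : (dlOut G u : ℝ) ≤ dlOut G' u := by exact_mod_cast Set.ncard_le_ncard hEl
  have hcost_s := mul_le_mul_of_nonneg_left hds hcs
  have hcost_l := mul_le_mul_of_nonneg_left hdl hcl
  rw [utilInf_eq_of_saturated hRs hRl]
  linarith [utilInf_le G' cs cl u]

theorem utilInf_delS_le_of_saturated {v : α} (huv : ∀ w, G.Es u w ↔ w = v)
    (hcs' : cs ≤ Fintype.card α - 1) : utilInf (delS G u v) cs cl u ≤ utilInf G cs cl u := by
  have hno : ∀ w, ¬(delS G u v).Es u w := fun w ⟨hw, hne⟩ => hne ⟨rfl, (huv w).1 hw⟩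
  have hds : dsOut G u = 1 := by
    simp only [dsOut, huv, Set.ofPred_eq_eq_singleton, Set.ncard_singleton]
  have hds' : dsOut (delS G u v) u = 0 := by
    simp only [dsOut, hno, Set.ofPred_false, Set.ncard_empty]
  have hRl' : ((RlInf (delS G u v) u).ncard : ℝ) ≤ (Fintype.card α - 1 : ℕ) := by
    exact_mod_cast ncard_RsInf_le (delS G u v).swap u
  have hdl : dlOut (delS G u v) u = dlOut G u := rfl
  rw [utilInf_eq_of_saturated hRs hRl, utilInf, RsInf_eq_empty _ hno, hds, hds', hdl]
  simp only [Set.ncard_empty, cast_card_sub_one u, Nat.cast_zero, Nat.cast_one] at hRl' ⊢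
  linarith

theorem utilInf_delL_le_of_saturated {v : α} (huv : ∀ w, G.El u w ↔ w = v)
    (hcl' : cl ≤ Fintype.card α - 1) : utilInf (delL G u v) cs cl u ≤ utilInf G cs cl u := by
  have := utilInf_delS_le_of_saturated (G := G.swap) (cs := cl) (cl := cs) hRl hRs huv hcl'
  rwa [← utilInf_swap (delS G.swap u v), utilInf_swap G] at this

end Saturated

namespace IsBiCycle

variable {G : BiNet α}

theorem swap (hG : IsBiCycle G) : IsBiCycle G.swap := by
  obtain ⟨e, hEs, hEl⟩ := hG
  refine ⟨e.trans (Equiv.neg _), fun u v => ?_, fun u v => ?_⟩ <;>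
  · have : Nonempty α := ⟨u⟩
    have : NeZero (Fintype.card α) := ⟨Fintype.card_ne_zero⟩
    simp only [BiNet.swap, Equiv.trans_apply, Equiv.neg_apply, ← Fin.eq_add_one_iff_val_eq,
      Fin.neg_eq_neg_add_one_iff, hEs, hEl]

theorem es_iff (hG : IsBiCycle G) {u v : α} (huv : G.Es u v) (w : α) : G.Es u w ↔ w = v := by
  obtain ⟨e, hEs, -⟩ := hG
  rw [hEs] at huv ⊢
  exact ⟨fun h => e.injective (Fin.ext (h.trans huv.symm)), fun h => h ▸ huv⟩

theorem reflTransGen_sStep (hG : IsBiCycle G) (u w : α) : ReflTransGen (sStep G) u w := by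
  obtain ⟨e, hEs, hEl⟩ := hG
  have : Nonempty α := ⟨u⟩
  have : NeZero (Fintype.card α) := ⟨Fintype.card_ne_zero⟩
  have hstep : ∀ a b, e b = e a + 1 → sStep G a b := fun a b h =>
    ⟨(hEs a b).2 (Fin.eq_add_one_iff_val_eq.1 h), (hEl b a).2 (Fin.eq_add_one_iff_val_eq.1 h)⟩
  simpa [Function.onFun] using (Fin.reflTransGen_add_one (e u) (e w)).lift e.symm
    fun a b h => hstep _ _ (by simpa using h)

theorem ncard_RsInf (hG : IsBiCycle G) (u : α) : (RsInf G u).ncard = Fintype.card α - 1 := by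
  rw [← ncard_setOf_ne u]
  congr
  ext w
  simp [RsInf, hG.reflTransGen_sStep u w]

end IsBiCycle

end

theorem stmt14_general (G : BiNet V) (cs cl : ℝ)
    (hcs : 0 ≤ cs) (hcs' : cs ≤ (Fintype.card V : ℝ) - 1)
    (hcl : 0 ≤ cl) (hcl' : cl ≤ (Fintype.card V : ℝ) - 1)
    (hG : IsBiCycle G) :
    BiPairwiseStableInf G cs cl := by
  have hRs := hG.ncard_RsInf
  have hRl : ∀ u, (RlInf G u).ncard = Fintype.card V - 1 := hG.swap.ncard_RsInf
  refine ⟨fun u v huv => ?_, fun u v huv => ?_, fun u v hlt => absurd hlt ?_⟩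
  · exact utilInf_delS_le_of_saturated (hRs u) (hRl u) (hG.es_iff huv) hcs'
  · exact utilInf_delL_le_of_saturated (hRs u) (hRl u) (hG.swap.es_iff huv) hcl'
  · exact (utilInf_le_of_saturated (hRs u) (hRl u) (fun _ => Or.inl) (fun _ => Or.inl)
      hcs hcl).not_gt

/-- For k = ∞ and `0 ≤ c_s ≤ n - 1`, `0 ≤ c_ℓ ≤ n - 1`, the bidirected n-cycle is
pairwise stable. -/
theorem stmt14 (G : BiNet V) (cs cl : ℝ) (hn : 2 ≤ Fintype.card V)
    (hcs : 0 ≤ cs) (hcs' : cs ≤ (Fintype.card V : ℝ) - 1)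
    (hcl : 0 ≤ cl) (hcl' : cl ≤ (Fintype.card V : ℝ) - 1)
    (hG : IsBiCycle G) :
    BiPairwiseStableInf G cs cl :=
  stmt14_general G cs cl hcs hcs' hcl hcl' hG
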